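/- arXiv:2209.14018 — 5 statements merged into one kernel-verified Lean document; each statement's English description precedes it below -/
import Mathlib

section
/- Let p be an odd prime, and suppose M = S_ξ X^b and M' = S_{ξ'} (diagonal, b' = 0) are elements of K_Q(p) with b ≠ 0 such that [M,M'] = ω^c·𝟙 for some c ∈ ℤ_p (ω = e^{2πi/p}). Then ξ'(q) = ω^{mcq + a} for some a ∈ ℤ_p and m with mb ≡ −1 mod p; in particular S_{ξ'} ∈ T_{(p)}. Moreover, if c = 0 then S_{ξ'} is a scalar multiple of the identity, hence central. -/
noncomputable section

open Matrix

/-- The generalised Pauli shift operator `X` on `ℂ^p`, with `X |q⟩ = |q+1⟩`. -/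
def Xmat (p : ℕ) [NeZero p] : Matrix (ZMod p) (ZMod p) ℂ :=
  Matrix.of fun i j => if i = j + 1 then 1 else 0

/-- The primitive `p`-th root of unity `ω = exp(2πi/p)`. -/
def ωp (p : ℕ) : ℂ := Complex.exp (2 * Real.pi * Complex.I / p)

lemma Xmat_pow_apply (p : ℕ) [NeZero p] (k : ℕ) (i j : ZMod p) :
    (Xmat p ^ k) i j = if i = j + (k : ZMod p) then (1:ℂ) else 0 := by
  induction k generalizing i j with
  | zero => simp [Matrix.one_apply, eq_comm]
  | succ n ih =>
    rw [pow_succ, Matrix.mul_apply]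
    simp only [Xmat, Matrix.of_apply, mul_ite, mul_one, mul_zero]
    rw [Finset.sum_ite_eq' Finset.univ (j+1) (fun l => ((Matrix.of fun i j => if i = j + 1 then (1:ℂ) else 0) ^ n) i l)]
    simp only [Finset.mem_univ, if_true]
    rw [show ((Matrix.of fun i j => if i = j + 1 then (1:ℂ) else 0) ^ n) = Xmat p ^ n from rfl, ih]
    push_cast
    rw [add_assoc, add_comm (1 : ZMod p)]

lemma zmod_sum_eq_zero (p : ℕ) [NeZero p] (hp : Nat.Prime p) (hodd : Odd p) :
    ∑ q : ZMod p, q = 0 := by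
  haveI : Fact p.Prime := ⟨hp⟩
  have h2 : (∑ q : ZMod p, q) + (∑ q : ZMod p, q) = 0 := by
    have := Fintype.sum_equiv (Equiv.neg (ZMod p)) (fun q => -q) (fun q => q) (fun q => rfl)
    calc (∑ q : ZMod p, q) + (∑ q : ZMod p, q)
        = (∑ q : ZMod p, q) + (∑ q : ZMod p, -q) := by rw [this]
      _ = ∑ q : ZMod p, (q + -q) := by rw [Finset.sum_add_distrib]
      _ = 0 := by simp
  have h2' : (2 : ZMod p) * ∑ q : ZMod p, q = 0 := by rw [two_mul]; exact h2
  have h2ne : (2 : ZMod p) ≠ 0 := by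
    intro h
    have h2 : ((2 : ℕ) : ZMod p) = 0 := by exact_mod_cast h
    have hdvd : p ∣ 2 := (ZMod.natCast_eq_zero_iff 2 p).mp h2
    have : p = 2 := (Nat.prime_dvd_prime_iff_eq hp Nat.prime_two).mp hdvd
    rw [this, Nat.odd_iff] at hodd
    simp at hodd
  exact (mul_eq_zero.mp h2').resolve_left h2ne

/-- Let `p` be an odd prime, `M = S_ξ X^b` with `b ≠ 0` and `M' = S_{ξ'}` diagonal, both in
`K_Q(p)`, such that `[M, M'] = ω^c 𝟙` (equivalently `M M' = ω^c (M' M)`).  Then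
`ξ'(q) = ω^{m c q + a}` for some `a`, where `m b = -1`; in particular `S_{ξ'} ∈ T_{(p)}`.
Moreover, if `c = 0` then `S_{ξ'}` is a scalar multiple of the identity, hence central. -/
theorem stmt_7 (p m : ℕ) [NeZero p] (hp : Nat.Prime p) (hodd : Odd p)
    (ξ ξ' : ZMod p → ℂ)
    (hξ : ∀ q, ξ q ^ p ^ m = 1) (hdet : ∏ q : ZMod p, ξ q = 1)
    (hξ' : ∀ q, ξ' q ^ p ^ m = 1) (hdet' : ∏ q : ZMod p, ξ' q = 1)
    (b : ZMod p) (hb : b ≠ 0) (c : ZMod p)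
    (hcomm : (Matrix.diagonal ξ * Xmat p ^ b.val) * Matrix.diagonal ξ' =
      ωp p ^ c.val • (Matrix.diagonal ξ' * (Matrix.diagonal ξ * Xmat p ^ b.val))) :
    (∀ m' : ZMod p, m' * b = -1 → ∃ a : ZMod p, ∀ q : ZMod p,
        ξ' q = ωp p ^ (m' * c * q + a).val) ∧
    (c = 0 → ∃ a : ZMod p,
        Matrix.diagonal ξ' = ωp p ^ a.val • (1 : Matrix (ZMod p) (ZMod p) ℂ)) := by
  haveI : Fact p.Prime := ⟨hp⟩
  set ω := ωp p with hωdef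
  have hω : IsPrimitiveRoot ω p := Complex.isPrimitiveRoot_exp p (NeZero.ne p)
  have hω1 : ω ^ p = 1 := hω.pow_eq_one
  have hmod : ∀ n : ℕ, ω ^ n = ω ^ (n % p) := fun n => by
    conv_lhs => rw [← Nat.div_add_mod n p, pow_add, pow_mul, hω1, one_pow, one_mul]
  have hcast : ∀ (x : ZMod p) (n : ℕ), (n : ZMod p) = x → ω ^ n = ω ^ x.val := by
    intro x n hn
    rw [hmod n, ← hn, ZMod.val_natCast]
  have hξne : ∀ q, ξ q ≠ 0 := fun q h => by
    have := hξ q; rw [h, zero_pow (Nat.pow_pos (n := m) (Nat.pos_of_ne_zero (NeZero.ne p))).ne'] at this; exact zero_ne_one this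
  -- key entrywise relation
  have hbv : ((b.val : ℕ) : ZMod p) = b := by simp [ZMod.natCast_val, ZMod.cast_id]
  have key : ∀ j : ZMod p, ξ' j = ω ^ c.val * ξ' (j + b) := by
    intro j
    have h := congrFun (congrFun hcomm (j + b)) j
    rw [Matrix.mul_apply] at h
    simp only [Matrix.smul_apply, smul_eq_mul, Matrix.diagonal_mul, Matrix.mul_diagonal,
      Matrix.of_apply, Xmat_pow_apply, hbv] at h
    simp only [if_true, add_left_inj, Matrix.diagonal_apply, mul_ite, mul_one, mul_zero,
      ite_mul, zero_mul, Finset.sum_ite_eq', Finset.mem_univ, if_pos rfl] at h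
    have h' : ξ (j + b) * ξ' j = ξ (j + b) * (ω ^ c.val * ξ' (j + b)) := by
      linear_combination h
    exact mul_left_cancel₀ (hξne (j + b)) h'
  have hωne : ω ≠ 0 := by rw [hωdef, ωp]; exact Complex.exp_ne_zero _
  -- iterate the relation
  have iter : ∀ (k : ℕ) (j : ZMod p), ξ' j = ω ^ (c.val * k) * ξ' (j + (k : ZMod p) * b) := by
    intro k
    induction k with
    | zero => intro j; simp
    | succ n ih =>
      intro j
      rw [ih j, key (j + (n : ZMod p) * b)]
      have harg : j + (n : ZMod p) * b + b = j + ((n + 1 : ℕ) : ZMod p) * b := by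
        push_cast; ring
      rw [harg, mul_add, mul_one, pow_add]
      ring
  have main : ∀ q : ZMod p, ξ' 0 = ω ^ (c.val * (q * b⁻¹).val) * ξ' q := by
    intro q
    have h := iter (q * b⁻¹).val 0
    have hcst : (((q * b⁻¹).val : ℕ) : ZMod p) = q * b⁻¹ := by
      simp [ZMod.natCast_val, ZMod.cast_id]
    rwa [hcst, zero_add, inv_mul_cancel_right₀ hb] at h
  -- ξ' 0 is a p-th root of unity
  have hsum0 : ((∑ q : ZMod p, (q * b⁻¹).val : ℕ) : ZMod p) = 0 := by
    push_cast [ZMod.natCast_val, ZMod.cast_id]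
    rw [← Finset.sum_mul, zmod_sum_eq_zero p hp hodd, zero_mul]
  have hdvdsum : p ∣ ∑ q : ZMod p, (q * b⁻¹).val :=
    (ZMod.natCast_eq_zero_iff _ p).mp hsum0
  have hroot : ξ' 0 ^ p = 1 := by
    have hprod : ∏ q : ZMod p, ξ' 0 = ∏ q : ZMod p, (ω ^ (c.val * (q * b⁻¹).val) * ξ' q) :=
      Finset.prod_congr rfl fun q _ => main q
    rw [Finset.prod_const, Finset.prod_mul_distrib, hdet', mul_one, Finset.card_univ,
      ZMod.card] at hprod
    obtain ⟨t, ht⟩ := hdvdsum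
    have : ∏ q : ZMod p, ω ^ (c.val * (q * b⁻¹).val) = 1 := by
      rw [Finset.prod_pow_eq_pow_sum, ← Finset.mul_sum, ht,
        show c.val * (p * t) = p * (c.val * t) by ring, pow_mul, hω1, one_pow]
    rw [this] at hprod
    exact hprod
  obtain ⟨i, hip, hi⟩ := hω.eq_pow_of_pow_eq_one hroot
  -- part 1
  have part1 : ∀ m' : ZMod p, m' * b = -1 → ∃ a : ZMod p, ∀ q : ZMod p,
      ξ' q = ω ^ (m' * c * q + a).val := by
    intro m' hm'
    have hm'' : m' = -b⁻¹ := by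
      have : m' * (b * b⁻¹) = -1 * b⁻¹ := by rw [← mul_assoc, hm']
      rwa [mul_inv_cancel₀ hb, mul_one, neg_one_mul] at this
    refine ⟨(i : ZMod p), fun q => ?_⟩
    have hval : (((i : ZMod p)).val : ZMod p) = (i : ZMod p) := by
      simp [ZMod.natCast_val, ZMod.cast_id]
    have e1 : ω ^ ((m' * c * q + (i : ZMod p)).val + c.val * (q * b⁻¹).val)
        = ω ^ ((i : ZMod p)).val := by
      apply hcast
      push_cast [ZMod.natCast_val, ZMod.cast_id]
      rw [hm'']
      ring
    have e2 : ω ^ ((i : ZMod p)).val = ξ' 0 := by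
      rw [← hi]
      congr 1
      exact ZMod.val_natCast_of_lt hip
    rw [pow_add] at e1
    have e3 : ω ^ ((m' * c * q + (i : ZMod p)).val) * ω ^ (c.val * (q * b⁻¹).val)
        = ω ^ (c.val * (q * b⁻¹).val) * ξ' q := by rw [e1, e2, main q]
    have := mul_right_cancel₀ (pow_ne_zero _ hωne) (e3.trans (mul_comm _ _))
    exact this.symm
  refine ⟨part1, fun hc => ?_⟩
  have hm' : (-b⁻¹ : ZMod p) * b = -1 := by
    rw [neg_mul, inv_mul_cancel₀ hb]
  obtain ⟨a, ha⟩ := part1 (-b⁻¹) hm'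
  refine ⟨a, ?_⟩
  ext x y
  rw [Matrix.diagonal_apply, Matrix.smul_apply, Matrix.one_apply]
  by_cases hxy : x = y
  · simp only [hxy, if_pos rfl, smul_eq_mul, mul_one]
    rw [ha y, hc]
    norm_num
  · simp [hxy]
end
end

section
/- Let p be an odd prime and M = S_ξ X^b, M' = S_{ξ'} X^{b'} ∈ K_Q(p) with b, b' ≠ 0 mod p and [M,M'] = ω^c·𝟙 for some c ∈ ℤ_p. Then there exist a, y ∈ ℤ_p with y·b = b' and a character χ(q) = ω^{c'q} with b'c' = −c, such that ω^a M' = (M S_χ)^y. In particular, if c = 0, then ω^a M' = M^y. -/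
noncomputable section

open Matrix

section aux

variable {p : ℕ} [NeZero p]

lemma Xpow_apply (k : ℕ) (i j : ZMod p) :
    (Xmat p ^ k) i j = if i = j + (k : ZMod p) then 1 else 0 := by
  induction k generalizing i j with
  | zero => simp [Matrix.one_apply]
  | succ k ih =>
    rw [pow_succ, Matrix.mul_apply]
    have hx : ∀ t : ZMod p, Xmat p t j = if t = j + 1 then (1:ℂ) else 0 := fun t => rfl
    simp only [hx, mul_ite, mul_one, mul_zero]
    rw [Finset.sum_ite_eq' Finset.univ (j + 1) fun t => (Xmat p ^ k) i t]
    simp only [Finset.mem_univ, if_true, ih]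
    have : j + 1 + (k : ZMod p) = j + ((k + 1 : ℕ) : ZMod p) := by push_cast; ring
    rw [this]

lemma DX_apply (f : ZMod p → ℂ) (k : ℕ) (i j : ZMod p) :
    (Matrix.diagonal f * Xmat p ^ k) i j = if i = j + (k : ZMod p) then f i else 0 := by
  rw [Matrix.diagonal_mul, Xpow_apply, mul_ite, mul_one, mul_zero]

lemma X_comm_diag (g : ZMod p → ℂ) (k : ℕ) :
    Xmat p ^ k * Matrix.diagonal g
      = Matrix.diagonal (fun q => g (q - (k : ZMod p))) * Xmat p ^ k := by
  ext i j
  rw [Matrix.mul_diagonal, Matrix.diagonal_mul, Xpow_apply]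
  by_cases h : i = j + (k : ZMod p)
  · simp [h]
  · simp [h]

lemma DX_mul_DX (f g : ZMod p → ℂ) (k l : ℕ) :
    (Matrix.diagonal f * Xmat p ^ k) * (Matrix.diagonal g * Xmat p ^ l)
      = Matrix.diagonal (fun q => f q * g (q - (k : ZMod p))) * Xmat p ^ (k + l) := by
  calc (Matrix.diagonal f * Xmat p ^ k) * (Matrix.diagonal g * Xmat p ^ l)
      = Matrix.diagonal f * (Xmat p ^ k * Matrix.diagonal g) * Xmat p ^ l := by
        simp only [mul_assoc]
    _ = Matrix.diagonal f * (Matrix.diagonal (fun q => g (q - (k : ZMod p))) * Xmat p ^ k)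
          * Xmat p ^ l := by rw [X_comm_diag]
    _ = (Matrix.diagonal f * Matrix.diagonal (fun q => g (q - (k : ZMod p))))
          * (Xmat p ^ k * Xmat p ^ l) := by simp only [mul_assoc]
    _ = Matrix.diagonal (fun q => f q * g (q - (k : ZMod p))) * Xmat p ^ (k + l) := by
        rw [Matrix.diagonal_mul_diagonal, ← pow_add]

lemma DX_pow (f : ZMod p → ℂ) (k : ℕ) (n : ℕ) :
    (Matrix.diagonal f * Xmat p ^ k) ^ n
      = Matrix.diagonal
          (fun q => ∏ j ∈ Finset.range n, f (q - (j : ZMod p) * (k : ZMod p)))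
        * Xmat p ^ (n * k) := by
  induction n with
  | zero => simp
  | succ n ih =>
    rw [pow_succ, ih, DX_mul_DX]
    have h1 : (fun q => (∏ j ∈ Finset.range n, f (q - (j : ZMod p) * (k : ZMod p)))
        * f (q - ((n * k : ℕ) : ZMod p)))
        = fun q => ∏ j ∈ Finset.range (n + 1), f (q - (j : ZMod p) * (k : ZMod p)) := by
      funext q
      rw [Finset.prod_range_succ]
      congr 2
      push_cast
      ring
    rw [h1]
    congr 1
    congr 1
    ring

lemma Xpow_congr (k l : ℕ) (h : (k : ZMod p) = (l : ZMod p)) :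
    Xmat p ^ k = Xmat p ^ l := by
  ext i j
  rw [Xpow_apply, Xpow_apply, h]

end aux

/-- Let `p` be an odd prime and `M = S_ξ X^b`, `M' = S_{ξ'} X^{b'}` in `K_Q(p)` with
`b, b' ≠ 0` and `[M, M'] = ω^c 𝟙` (equivalently `M M' = ω^c (M' M)`).  Then there are
`a, y, c' ∈ ℤ_p` with `y b = b'`, `b' c' = -c` and `ω^a M' = (M S_χ)^y` for the character
`χ(q) = ω^{c' q}`.  In particular, if `c = 0` then `ω^a M' = M^y`. -/
theorem stmt_8 (p m : ℕ) [NeZero p] (hp : Nat.Prime p) (hodd : Odd p)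
    (ξ ξ' : ZMod p → ℂ)
    (hξ : ∀ q, ξ q ^ p ^ m = 1) (hdet : ∏ q : ZMod p, ξ q = 1)
    (hξ' : ∀ q, ξ' q ^ p ^ m = 1) (hdet' : ∏ q : ZMod p, ξ' q = 1)
    (b b' : ZMod p) (hb : b ≠ 0) (hb' : b' ≠ 0) (c : ZMod p)
    (hcomm : (Matrix.diagonal ξ * Xmat p ^ b.val) * (Matrix.diagonal ξ' * Xmat p ^ b'.val) =
      ωp p ^ c.val •
        ((Matrix.diagonal ξ' * Xmat p ^ b'.val) * (Matrix.diagonal ξ * Xmat p ^ b.val))) :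
    ∃ a y c' : ZMod p, y * b = b' ∧ b' * c' = -c ∧
      ωp p ^ a.val • (Matrix.diagonal ξ' * Xmat p ^ b'.val) =
        ((Matrix.diagonal ξ * Xmat p ^ b.val) *
          Matrix.diagonal (fun q : ZMod p => ωp p ^ (c' * q).val)) ^ y.val ∧
      (c = 0 → ωp p ^ a.val • (Matrix.diagonal ξ' * Xmat p ^ b'.val) =
        (Matrix.diagonal ξ * Xmat p ^ b.val) ^ y.val) := by
  haveI : Fact (Nat.Prime p) := ⟨hp⟩
  set ω := ωp p with hωdef
  -- basic facts about ω
  have hprim : IsPrimitiveRoot ω p := by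
    have := Complex.isPrimitiveRoot_exp p (NeZero.ne p)
    rw [hωdef, ωp]; exact this
  have hωp1 : ω ^ p = 1 := hprim.pow_eq_one
  have hmod : ∀ n : ℕ, ω ^ n = ω ^ (n % p) := by
    intro n
    conv_lhs => rw [← Nat.div_add_mod n p]
    rw [pow_add, pow_mul, hωp1, one_pow, one_mul]
  have φadd : ∀ x y : ZMod p, ω ^ ((x + y).val) = ω ^ x.val * ω ^ y.val := by
    intro x y
    rw [ZMod.val_add, ← hmod, pow_add]
  have φnat : ∀ n : ℕ, ω ^ n = ω ^ ((n : ZMod p)).val := by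
    intro n; rw [ZMod.val_natCast, hmod]
  have φsum : ∀ f : ZMod p → ZMod p,
      ∏ q : ZMod p, ω ^ ((f q).val) = ω ^ ((∑ q : ZMod p, f q).val) := by
    intro f
    rw [Finset.prod_pow_eq_pow_sum, φnat]
    congr 2
    push_cast
    simp [ZMod.natCast_val, ZMod.cast_id]
  -- nonvanishing
  have hpm : p ^ m ≠ 0 := pow_ne_zero _ (NeZero.ne p)
  have hξne : ∀ q, ξ q ≠ 0 := by
    intro q h0
    have := hξ q; rw [h0, zero_pow hpm] at this; exact zero_ne_one this
  have hξ'ne : ∀ q, ξ' q ≠ 0 := by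
    intro q h0
    have := hξ' q; rw [h0, zero_pow hpm] at this; exact zero_ne_one this
  have hωne : ω ≠ 0 := by rw [hωdef, ωp]; exact Complex.exp_ne_zero _
  -- witnesses
  set y : ZMod p := b' * b⁻¹ with hydef
  set c' : ZMod p := -c * b'⁻¹ with hc'def
  have hyb : y * b = b' := by
    rw [hydef]; field_simp
  have hb'c' : b' * c' = -c := by
    rw [hc'def]; field_simp
  set Y : ℕ := y.val with hYdef
  have hYcast : ((Y : ℕ) : ZMod p) = y := by
    rw [hYdef]; simp [ZMod.natCast_val, ZMod.cast_id]
  have hbcast : ((b.val : ℕ) : ZMod p) = b := by simp [ZMod.natCast_val, ZMod.cast_id]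
  have hb'cast : ((b'.val : ℕ) : ZMod p) = b' := by simp [ZMod.natCast_val, ZMod.cast_id]
  set η : ZMod p → ℂ := fun q => ξ q * ω ^ ((c' * (q - b)).val) with hηdef
  have hηne : ∀ q, η q ≠ 0 := fun q => mul_ne_zero (hξne q) (pow_ne_zero _ hωne)
  -- entrywise commutation relation
  have key : ∀ r : ZMod p, ξ r * ξ' (r - b) = ω ^ c.val * (ξ' r * ξ (r - b')) := by
    intro r
    have h0 := Matrix.ext_iff.mpr hcomm r (r - b - b')
    rw [DX_mul_DX, DX_mul_DX, Matrix.smul_apply, DX_apply, DX_apply] at h0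
    rw [hbcast, hb'cast] at h0
    have e1 : r = r - b - b' + ((b.val + b'.val : ℕ) : ZMod p) := by
      push_cast; rw [hbcast, hb'cast]; ring
    have e2 : r = r - b - b' + ((b'.val + b.val : ℕ) : ZMod p) := by
      push_cast; rw [hbcast, hb'cast]; ring
    rw [if_pos e1, if_pos e2, smul_eq_mul] at h0
    exact h0
  set F : ZMod p → ℂ := fun q => ∏ j ∈ Finset.range Y, η (q - (j : ZMod p) * b) with hFdef
  -- (★)
  have star : ∀ q : ZMod p, F (q + b) * η (q + b - b') = η (q + b) * F q := by
    intro q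
    have h1 : F (q + b) * η (q + b - b')
        = ∏ j ∈ Finset.range (Y + 1), η (q + b - (j : ZMod p) * b) := by
      rw [Finset.prod_range_succ, hFdef]
      congr 2
      rw [hYcast, hyb]
    rw [h1, Finset.prod_range_succ']
    have h2 : ∀ j : ℕ, q + b - ((j + 1 : ℕ) : ZMod p) * b = q - (j : ZMod p) * b := by
      intro j; push_cast; ring
    have h3 : q + b - ((0 : ℕ) : ZMod p) * b = q + b := by push_cast; ring
    rw [h3]
    rw [Finset.prod_congr rfl fun j _ => by rw [h2 j]]
    ring
  -- (★★)
  have star2 : ∀ r : ZMod p, η r * ξ' (r - b) = η (r - b') * ξ' r := by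
    intro r
    have e1 : c' * (r - b' - b) = c' * (r - b) + c := by
      linear_combination -hb'c'
    have e2 : ω ^ ((c' * (r - b' - b)).val) = ω ^ ((c' * (r - b)).val) * ω ^ c.val := by
      rw [e1, φadd]
    rw [hηdef]
    simp only
    rw [e2]
    linear_combination (ω ^ ((c' * (r - b)).val)) * key r
  -- step relation for F
  have Hstep : ∀ q : ZMod p, F (q + b) * ξ' q = F q * ξ' (q + b) := by
    intro q
    have h2 := star2 (q + b)
    rw [add_sub_cancel_right] at h2
    apply mul_left_cancel₀ (hηne (q + b - b'))
    linear_combination ξ' q * star q + F q * h2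
  have Hn : ∀ n : ℕ, F ((n : ZMod p) * b) * ξ' 0 = F 0 * ξ' ((n : ZMod p) * b) := by
    intro n
    induction n with
    | zero => push_cast; rw [zero_mul]
    | succ n ih =>
      have h3 := Hstep ((n : ZMod p) * b)
      have hc : ((n + 1 : ℕ) : ZMod p) * b = (n : ZMod p) * b + b := by push_cast; ring
      rw [hc]
      apply mul_left_cancel₀ (hξ'ne ((n : ZMod p) * b))
      linear_combination ξ' 0 * h3 + ξ' ((n : ZMod p) * b + b) * ih
  have Hq : ∀ q : ZMod p, F q * ξ' 0 = F 0 * ξ' q := by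
    intro q
    have h := Hn (q * b⁻¹).val
    have hcast : (((q * b⁻¹).val : ℕ) : ZMod p) = q * b⁻¹ := by
      simp [ZMod.natCast_val, ZMod.cast_id]
    rw [hcast] at h
    have hq : q * b⁻¹ * b = q := by field_simp
    rwa [hq] at h
  set g : ℂ := F 0 / ξ' 0 with hgdef
  have hg : ∀ q, F q = g * ξ' q := by
    intro q
    rw [hgdef, div_mul_eq_mul_div, eq_div_iff (hξ'ne 0)]
    linear_combination Hq q
  -- sum of all elements of ZMod p is 0
  have hsum0 : (∑ q : ZMod p, q) = 0 := by
    have h1 : (∑ q : ZMod p, q) = ∑ q : ZMod p, -q :=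
      Fintype.sum_equiv (Equiv.neg (ZMod p)) _ _ (fun x => (neg_neg x).symm)
    have h2 : (2 : ZMod p) * ∑ q : ZMod p, q = 0 := by
      rw [two_mul]
      nth_rewrite 2 [h1]
      rw [← Finset.sum_add_distrib]
      simp
    have h3 : (2 : ZMod p) ≠ 0 := by
      intro h
      have : (p : ℕ) ∣ 2 := by
        have := (ZMod.natCast_eq_zero_iff 2 p).mp (by exact_mod_cast h)
        exact this
      have hp2 : p = 2 := (Nat.prime_dvd_prime_iff_eq hp Nat.prime_two).mp this
      rw [hp2, Nat.odd_iff] at hodd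
      simp at hodd
    exact (mul_eq_zero.mp h2).resolve_left h3
  -- ∏ η = 1
  have hprodη : ∏ q : ZMod p, η q = 1 := by
    rw [hηdef]
    rw [Finset.prod_mul_distrib, hdet, one_mul]
    rw [φsum]
    have : (∑ q : ZMod p, c' * (q - b)) = 0 := by
      rw [← Finset.mul_sum]
      have : (∑ q : ZMod p, (q - b)) = ∑ q : ZMod p, q :=
        Fintype.sum_equiv (Equiv.subRight b) _ _ (fun x => rfl)
      rw [this, hsum0, mul_zero]
    rw [this]
    simp [ZMod.val_zero]
  -- ∏ F = 1
  have hprodF : ∏ q : ZMod p, F q = 1 := by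
    rw [hFdef]
    simp only
    rw [Finset.prod_comm]
    have hinner : ∀ j : ℕ, (∏ q : ZMod p, η (q - (j : ZMod p) * b)) = 1 := by
      intro j
      have : (∏ q : ZMod p, η (q - (j : ZMod p) * b)) = ∏ q : ZMod p, η q :=
        Fintype.prod_equiv (Equiv.subRight ((j : ZMod p) * b)) _ _ (fun x => rfl)
      rw [this, hprodη]
    rw [Finset.prod_congr rfl fun j _ => hinner j, Finset.prod_const_one]
  -- g is a p-th root of unity
  have hgp : g ^ p = 1 := by
    have h1 : (∏ q : ZMod p, (g * ξ' q)) = g ^ p := by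
      rw [Finset.prod_mul_distrib, hdet', mul_one, Finset.prod_const, Finset.card_univ,
        ZMod.card]
    rw [← h1, ← Finset.prod_congr rfl fun q _ => hg q, hprodF]
  obtain ⟨i, hip, hgi⟩ := hprim.eq_pow_of_pow_eq_one hgp
  have hav : ((i : ZMod p)).val = i := ZMod.val_cast_of_lt hip
  -- convert M * S_χ to diagonal η * X^b form
  have hm1 : (Matrix.diagonal ξ * Xmat p ^ b.val)
        * Matrix.diagonal (fun q : ZMod p => ω ^ (c' * q).val)
      = Matrix.diagonal η * Xmat p ^ b.val := by
    have h0 : Matrix.diagonal (fun q : ZMod p => ω ^ (c' * q).val)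
        = Matrix.diagonal (fun q : ZMod p => ω ^ (c' * q).val) * Xmat p ^ 0 := by
      rw [pow_zero, mul_one]
    rw [h0, DX_mul_DX, Nat.add_zero]
    have h1 : (fun q : ZMod p => ξ q * ω ^ ((c' * (q - ((b.val : ℕ) : ZMod p))).val)) = η := by
      funext q; rw [hbcast, hηdef]
    rw [h1]
  have hm2 := DX_pow η b.val Y
  simp only [hbcast] at hm2
  rw [← hFdef] at hm2
  have hm3 : ω ^ ((i : ZMod p)).val • (Matrix.diagonal ξ' * Xmat p ^ b'.val)
      = Matrix.diagonal (fun q => g * ξ' q) * Xmat p ^ b'.val := by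
    rw [hav, hgi, ← smul_mul_assoc, ← Matrix.diagonal_smul]
    rfl
  have hcast2 : ((Y * b.val : ℕ) : ZMod p) = ((b'.val : ℕ) : ZMod p) := by
    push_cast
    rw [hYcast, hbcast, hb'cast, hyb]
  have hmain : ω ^ ((i : ZMod p)).val • (Matrix.diagonal ξ' * Xmat p ^ b'.val) =
      ((Matrix.diagonal ξ * Xmat p ^ b.val)
        * Matrix.diagonal (fun q : ZMod p => ω ^ (c' * q).val)) ^ Y := by
    rw [hm3, hm1, hm2, Xpow_congr (Y * b.val) b'.val hcast2]
    have h4 : (fun q : ZMod p => g * ξ' q) = F := funext fun q => (hg q).symm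
    rw [h4]
  refine ⟨(i : ZMod p), y, c', hyb, hb'c', hmain, fun hc0 => ?_⟩
  have hc'0 : c' = 0 := by rw [hc'def, hc0]; ring
  have hχ1 : Matrix.diagonal (fun q : ZMod p => ω ^ (c' * q).val) = 1 := by
    have h2 : (fun q : ZMod p => ω ^ ((c' * q).val)) = fun _ => 1 := by
      funext q; rw [hc'0, zero_mul, ZMod.val_zero, pow_zero]
    rw [h2]
    exact Matrix.diagonal_one
  have h3 := hmain
  rw [hχ1, mul_one] at h3
  exact h3
end
end

section
/- Let p be an odd prime and Q = T_{(p^m)}. Every function ξ: ℤ_p → U(1) with ξ(q)^{p^m} = 1 for all q can be written uniquely as ξ(q) = ∏_{k=1}^{m} exp( (2πi/p^k) · Σ_{a=0}^{p−1} ϑ_{k,a} q^a ) with coefficients ϑ_{k,a} ∈ ℤ_p. Equivalently, the group Q_m^{(p)} of diagonal p×p matrices with entries p^m-th roots of unity equals the group G_m^{(p)} of diagonal matrices of this polynomial-exponential form. -/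
noncomputable section

open Matrix

/-- The polynomial-exponential form
`ξ(q) = ∏_{k=1}^{m} exp((2πi/p^k) · Σ_{a=0}^{p-1} ϑ_{k,a} q^a)` with `ϑ_{k,a} ∈ ℤ_p`. -/
def expForm (p m : ℕ) [NeZero p] (ϑ : Fin m → ZMod p → ZMod p) (q : ZMod p) : ℂ :=
  ∏ k : Fin m, Complex.exp (2 * Real.pi * Complex.I / (p ^ (k.val + 1)) *
    ∑ a : ZMod p, ((ϑ k a).val : ℂ) * ((q.val : ℂ) ^ a.val))

/-- The `n`-fold Kronecker product of `p × p` matrices, as a matrix indexed by `ℤ_p^n`. -/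
def kron (p n : ℕ) [NeZero p] (Ms : Fin n → Matrix (ZMod p) (ZMod p) ℂ) :
    Matrix (Fin n → ZMod p) (Fin n → ZMod p) ℂ :=
  Matrix.of fun f g => ∏ i, Ms i (f i) (g i)


def Sint (p : ℕ) [NeZero p] (c : ZMod p → ZMod p) (q : ZMod p) : ℤ :=
  ∑ a : ZMod p, ((c a).val : ℤ) * ((q.val : ℤ)) ^ a.val

lemma poly_eq (p : ℕ) [NeZero p] (hp : p.Prime) (c c' : ZMod p → ZMod p)
    (h : ∀ q : ZMod p, ∑ a : ZMod p, c a * q ^ a.val = ∑ a : ZMod p, c' a * q ^ a.val) :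
    c = c' := by
  haveI : Fact p.Prime := ⟨hp⟩
  set P : Polynomial (ZMod p) :=
    ∑ a : ZMod p, Polynomial.C (c a - c' a) * Polynomial.X ^ a.val with hP
  have hppos : 0 < p := hp.pos
  have hdeg : P.natDegree < p := by
    have : P.natDegree ≤ p - 1 := by
      apply Polynomial.natDegree_sum_le_of_forall_le
      intro a _
      refine le_trans (Polynomial.natDegree_C_mul_le _ _) ?_
      simpa [Polynomial.natDegree_X_pow] using Nat.le_sub_one_of_lt (ZMod.val_lt a)
    omega
  have heval : ∀ q : ZMod p, P.eval q = 0 := by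
    intro q
    simp only [hP, Polynomial.eval_finset_sum, Polynomial.eval_mul, Polynomial.eval_C,
      Polynomial.eval_pow, Polynomial.eval_X, sub_mul]
    rw [Finset.sum_sub_distrib, h q, sub_self]
  have hP0 : P = 0 := by
    apply Polynomial.eq_zero_of_natDegree_lt_card_of_eval_eq_zero P Function.injective_id heval
    simpa [ZMod.card] using hdeg
  funext a
  have := congrArg (fun Q => Polynomial.coeff Q a.val) hP0
  simp only [hP, Polynomial.finset_sum_coeff, Polynomial.coeff_C_mul, Polynomial.coeff_X_pow,
    Polynomial.coeff_zero, mul_ite, mul_one, mul_zero] at this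
  rw [Finset.sum_eq_single a (fun b _ hb => by
      rw [if_neg (fun h' : a.val = b.val => hb (ZMod.val_injective p h'.symm))])
    (by simp)] at this
  rw [if_pos rfl] at this
  exact sub_eq_zero.mp this

/-- cast of `Sint` to `ZMod p`. -/
lemma Sint_cast (p : ℕ) [NeZero p] (c : ZMod p → ZMod p) (q : ZMod p) :
    ((Sint p c q : ℤ) : ZMod p) = ∑ a : ZMod p, c a * q ^ a.val := by
  simp [Sint]

lemma key (p : ℕ) [NeZero p] (hp : p.Prime) : ∀ (m : ℕ) (ϑ ϑ' : Fin m → ZMod p → ZMod p),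
    (∀ q : ZMod p, (∑ k : Fin m, (p : ℤ) ^ (m - 1 - k.val) * Sint p (ϑ k) q) ≡
       (∑ k : Fin m, (p : ℤ) ^ (m - 1 - k.val) * Sint p (ϑ' k) q) [ZMOD (p : ℤ) ^ m]) →
    ϑ = ϑ' := by
  intro m
  induction m with
  | zero => intro ϑ ϑ' _; funext k; exact k.elim0
  | succ m ih =>
    intro ϑ ϑ' h
    -- split sums
    have hsplit : ∀ (ψ : Fin (m+1) → ZMod p → ZMod p) (q : ZMod p),
        (∑ k : Fin (m+1), (p : ℤ) ^ (m + 1 - 1 - k.val) * Sint p (ψ k) q) =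
        (p : ℤ) * (∑ k : Fin m, (p : ℤ) ^ (m - 1 - k.val) * Sint p (ψ k.castSucc) q)
          + Sint p (ψ (Fin.last m)) q := by
      intro ψ q
      rw [Fin.sum_univ_castSucc, Finset.mul_sum]
      congr 1
      · apply Finset.sum_congr rfl
        intro k _
        have : m + 1 - 1 - (k.castSucc : Fin (m+1)).val = (m - 1 - k.val) + 1 := by
          have := k.isLt; simp [Fin.coe_castSucc]; omega
        rw [this, pow_succ]; ring
      · simp
    -- last level equal
    have hlast : ϑ (Fin.last m) = ϑ' (Fin.last m) := by
      apply poly_eq p hp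
      intro q
      have h1 : Sint p (ϑ (Fin.last m)) q ≡ Sint p (ϑ' (Fin.last m)) q [ZMOD (p : ℤ)] := by
        have hd : (p : ℤ) ∣ (p : ℤ) ^ (m + 1) := dvd_pow_self _ (Nat.succ_ne_zero m)
        have := ((h q).of_dvd hd)
        rw [hsplit ϑ q, hsplit ϑ' q] at this
        have h2 : ((p : ℤ) * ∑ k : Fin m, (p : ℤ) ^ (m - 1 - k.val) * Sint p (ϑ k.castSucc) q)
            ≡ 0 [ZMOD (p:ℤ)] := Int.modEq_zero_iff_dvd.mpr (Dvd.intro _ rfl)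
        have h3 : ((p : ℤ) * ∑ k : Fin m, (p : ℤ) ^ (m - 1 - k.val) * Sint p (ϑ' k.castSucc) q)
            ≡ 0 [ZMOD (p:ℤ)] := Int.modEq_zero_iff_dvd.mpr (Dvd.intro _ rfl)
        calc Sint p (ϑ (Fin.last m)) q
            ≡ _ + Sint p (ϑ (Fin.last m)) q [ZMOD (p:ℤ)] := by
              simpa using (h2.symm.add_right (Sint p (ϑ (Fin.last m)) q))
          _ ≡ _ + Sint p (ϑ' (Fin.last m)) q [ZMOD (p:ℤ)] := this
          _ ≡ 0 + Sint p (ϑ' (Fin.last m)) q [ZMOD (p:ℤ)] :=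
              h3.add_right _
          _ = Sint p (ϑ' (Fin.last m)) q := by ring
      have := (ZMod.intCast_eq_intCast_iff _ _ _).mpr (by exact_mod_cast h1)
      rwa [Sint_cast, Sint_cast] at this
    -- cancel last, divide by p
    have hrest : (fun k : Fin m => ϑ k.castSucc) = (fun k => ϑ' k.castSucc) := by
      apply ih
      intro q
      have hq := h q
      rw [hsplit ϑ q, hsplit ϑ' q, hlast] at hq
      have hq' := hq.add_right_cancel' _
      have hdvd := Int.ModEq.dvd hq'
      have hpne : (p : ℤ) ≠ 0 := by exact_mod_cast hp.pos.ne'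
      rw [pow_succ', ← mul_sub] at hdvd
      exact Int.modEq_iff_dvd.mpr ((mul_dvd_mul_iff_left hpne).mp hdvd)
    funext k
    refine Fin.lastCases hlast (fun i => ?_) k
    exact congrFun hrest i

lemma expForm_eq_exp (p m : ℕ) [NeZero p] (ϑ : Fin m → ZMod p → ZMod p) (q : ZMod p) :
    expForm p m ϑ q =
      Complex.exp (∑ k : Fin m, 2 * Real.pi * Complex.I / (p ^ (k.val + 1)) *
        ((Sint p (ϑ k) q : ℤ) : ℂ)) := by
  rw [expForm, ← Complex.exp_sum]
  congr 1
  refine Finset.sum_congr rfl fun k _ => ?_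
  congr 1
  rw [Sint]
  push_cast
  rfl

lemma expForm_pow (p m : ℕ) [NeZero p] (ϑ : Fin m → ZMod p → ZMod p) (q : ZMod p) :
    expForm p m ϑ q ^ p ^ m = 1 := by
  rw [expForm_eq_exp, ← Complex.exp_nat_mul]
  rw [Finset.mul_sum]
  rw [Complex.exp_sum]
  apply Finset.prod_eq_one
  intro k _
  have hpne : (p : ℂ) ≠ 0 := by
    exact_mod_cast (NeZero.ne p)
  have hsplit : (p : ℂ) ^ m = (p : ℂ) ^ (k.val + 1) * (p : ℂ) ^ (m - 1 - k.val) := by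
    rw [← pow_add]; congr 1; have := k.isLt; omega
  have : (p : ℂ) ^ m * (2 * Real.pi * Complex.I / (p ^ (k.val + 1)) *
        ((Sint p (ϑ k) q : ℤ) : ℂ)) =
      (((p : ℤ) ^ (m - 1 - k.val) * Sint p (ϑ k) q : ℤ) : ℂ) * (2 * Real.pi * Complex.I) := by
    push_cast
    rw [hsplit]
    field_simp
  rw [Nat.cast_pow, this, Complex.exp_int_mul_two_pi_mul_I]

lemma expForm_inj (p m : ℕ) [NeZero p] (hp : p.Prime) (ϑ ϑ' : Fin m → ZMod p → ZMod p)
    (h : ∀ q, expForm p m ϑ q = expForm p m ϑ' q) : ϑ = ϑ' := by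
  apply key p hp m
  intro q
  have hq := h q
  rw [expForm_eq_exp, expForm_eq_exp, Complex.exp_eq_exp_iff_exists_int] at hq
  obtain ⟨n, hn⟩ := hq
  have hpne : (p : ℂ) ≠ 0 := by exact_mod_cast (NeZero.ne p)
  -- multiply by p^m / (2πi)
  have hC : ((∑ k : Fin m, (p : ℤ) ^ (m - 1 - k.val) * Sint p (ϑ k) q : ℤ) : ℂ) =
      ((∑ k : Fin m, (p : ℤ) ^ (m - 1 - k.val) * Sint p (ϑ' k) q + n * (p:ℤ) ^ m : ℤ) : ℂ) := by
    have key2 : ∀ ψ : Fin m → ZMod p → ZMod p,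
        ((∑ k : Fin m, (p : ℤ) ^ (m - 1 - k.val) * Sint p (ψ k) q : ℤ) : ℂ) * (2 * Real.pi * Complex.I)
        = (p : ℂ) ^ m * ∑ k : Fin m, 2 * Real.pi * Complex.I / (p ^ (k.val + 1)) *
            ((Sint p (ψ k) q : ℤ) : ℂ) := by
      intro ψ
      rw [Finset.mul_sum]
      push_cast
      rw [Finset.sum_mul]
      refine Finset.sum_congr rfl fun k _ => ?_
      have hsplit : (p : ℂ) ^ m = (p : ℂ) ^ (k.val + 1) * (p : ℂ) ^ (m - 1 - k.val) := by
        rw [← pow_add]; congr 1; have := k.isLt; omega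
      rw [hsplit]; field_simp
    have h2 := congrArg (fun z => (p : ℂ) ^ m * z) hn
    simp only [mul_add] at h2
    rw [← key2 ϑ, ← key2 ϑ'] at h2
    apply mul_right_cancel₀ (Complex.two_pi_I_ne_zero)
    rw [h2]
    push_cast
    ring
  have := Int.cast_injective (α := ℂ) hC
  exact Int.modEq_iff_dvd.mpr ⟨-n, by linarith [this]⟩

/-- Let `p` be an odd prime.  Every `ξ : ℤ_p → U(1)` with `ξ(q)^{p^m} = 1` for all `q` can be
written **uniquely** as `ξ(q) = ∏_{k=1}^{m} exp((2πi/p^k) Σ_{a=0}^{p-1} ϑ_{k,a} q^a)` with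
`ϑ_{k,a} ∈ ℤ_p` (equivalently `Q_m^{(p)} = G_m^{(p)}`). -/
theorem stmt_10 (p m : ℕ) [NeZero p] (hp : Nat.Prime p) (hodd : Odd p)
    (ξ : ZMod p → ℂ) (hξ : ∀ q, ξ q ^ p ^ m = 1) :
    ∃! ϑ : Fin m → ZMod p → ZMod p, ∀ q, ξ q = expForm p m ϑ q := by
  have hpm : 0 < p ^ m := pow_pos hp.pos m
  set S := Polynomial.nthRootsFinset (p ^ m) (1 : ℂ) with hS
  have hmem : ∀ (ϑ : Fin m → ZMod p → ZMod p) (q : ZMod p), expForm p m ϑ q ∈ S :=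
    fun ϑ q => (Polynomial.mem_nthRootsFinset hpm (1 : ℂ)).mpr (expForm_pow p m ϑ q)
  set Φ : (Fin m → ZMod p → ZMod p) → (ZMod p → S) :=
    fun ϑ q => ⟨expForm p m ϑ q, hmem ϑ q⟩ with hΦ
  have hinj : Function.Injective Φ := fun ϑ ϑ' h =>
    expForm_inj p m hp ϑ ϑ' fun q => congrArg Subtype.val (congrFun h q)
  have hcardS : Fintype.card S = p ^ m := by
    rw [Fintype.card_coe]
    exact (Complex.isPrimitiveRoot_exp (p ^ m) hpm.ne').card_nthRootsFinset
  have hcard : Fintype.card (Fin m → ZMod p → ZMod p) = Fintype.card (ZMod p → S) := by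
    simp only [Fintype.card_fun, hcardS, ZMod.card, Fintype.card_fin]
    rw [← pow_mul, ← pow_mul, mul_comm]
  have hsurj : Function.Surjective Φ :=
    ((Fintype.bijective_iff_injective_and_card Φ).mpr ⟨hinj, hcard⟩).surjective
  obtain ⟨ϑ, hϑ⟩ := hsurj (fun q => ⟨ξ q, (Polynomial.mem_nthRootsFinset hpm (1 : ℂ)).mpr (hξ q)⟩)
  refine ⟨ϑ, fun q => ?_, fun ϑ' hϑ' => ?_⟩
  · exact (congrArg Subtype.val (congrFun hϑ q)).symm
  · refine expForm_inj p m hp ϑ' ϑ fun q => ?_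
    rw [← hϑ' q]
    exact (congrArg Subtype.val (congrFun hϑ q)).symm
end
end

section
/- Let p be an odd prime. An element M = M_1 ⊗ ⋯ ⊗ M_n ∈ K_Q(p)^{⊗n} with M_i = S_{ξ_i} X^{b_i} is p-torsion (M^p = 𝟙) if: for all i with b_i ≠ 0 no condition beyond b_i ≠ 0 is needed; for all i with b_i = 0, the polynomial expansion coefficients of ξ_i satisfy ϑ_{j,a}^{(i)} = 0 for all j ≥ 2 and a ≠ 0; and Σ_{i: b_i = 0} ϑ_{2,0}^{(i)} ≡ 0 mod p. -/
noncomputable section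

open Matrix

def shiftD (p : ℕ) [NeZero p] (d : ZMod p → ℂ) (u : ZMod p) : Matrix (ZMod p) (ZMod p) ℂ :=
  Matrix.of fun i j => if i = j + u then d i else 0

lemma shiftD_mul (p : ℕ) [NeZero p] (d e : ZMod p → ℂ) (u v : ZMod p) :
    shiftD p d u * shiftD p e v = shiftD p (fun i => d i * e (i - u)) (u + v) := by
  ext i j
  simp only [Matrix.mul_apply, shiftD, Matrix.of_apply]
  rw [Finset.sum_eq_single (j + v)]
  · by_cases h : i = j + (u + v)
    · have h1 : j + (u + v) = j + v + u := by ring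
      have h2 : j + (u + v) - u = j + v := by ring
      subst h
      simp [h1, h2]
    · have h1 : ¬ (i = j + v + u) := fun hc => h (by rw [hc]; ring)
      simp [h, h1]
  · intro k _ hk
    simp [hk]
  · intro h
    simp at h

lemma diagonal_eq_shiftD (p : ℕ) [NeZero p] (d : ZMod p → ℂ) :
    Matrix.diagonal d = shiftD p d 0 := by
  ext i j
  simp only [shiftD, Matrix.of_apply, Matrix.diagonal_apply, add_zero]

lemma shiftD_one (p : ℕ) [NeZero p] : shiftD p (fun _ => 1) 0 = 1 := by
  ext i j
  simp [shiftD, Matrix.one_apply]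

lemma Xmat_pow (p : ℕ) [NeZero p] (c : ℕ) :
    Xmat p ^ c = shiftD p (fun _ => 1) (c : ZMod p) := by
  induction c with
  | zero => simpa using (shiftD_one p).symm
  | succ c ih =>
    have hX : Xmat p = shiftD p (fun _ => 1) 1 := rfl
    rw [pow_succ, ih, hX, shiftD_mul]
    push_cast
    simp

lemma shiftD_pow (p : ℕ) [NeZero p] (d : ZMod p → ℂ) (u : ZMod p) (k : ℕ) :
    (shiftD p d u) ^ k
      = shiftD p (fun i => ∏ t ∈ Finset.range k, d (i - (t : ZMod p) * u)) (k • u) := by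
  induction k with
  | zero =>
    simpa using (shiftD_one p).symm
  | succ k ih =>
    rw [pow_succ', ih, shiftD_mul]
    have h1 : (fun i => d i * ∏ t ∈ Finset.range k, d (i - u - (t : ZMod p) * u))
        = fun i => ∏ t ∈ Finset.range (k + 1), d (i - (t : ZMod p) * u) := by
      funext i
      rw [Finset.prod_range_succ', mul_comm]
      congr 1
      · apply Finset.prod_congr rfl
        intro t _
        congr 1
        push_cast
        ring
      · push_cast; simp
    rw [h1, succ_nsmul']


lemma kron_mul (p n : ℕ) [NeZero p] (A B : Fin n → Matrix (ZMod p) (ZMod p) ℂ) :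
    kron p n A * kron p n B = kron p n (fun i => A i * B i) := by
  ext f g
  simp only [kron, Matrix.mul_apply, Matrix.of_apply]
  conv_rhs => rw [Finset.prod_univ_sum]
  simp [Fintype.piFinset_univ, Finset.prod_mul_distrib]

lemma kron_pow (p n : ℕ) [NeZero p] (A : Fin n → Matrix (ZMod p) (ZMod p) ℂ) (k : ℕ)
    (hk : 1 ≤ k) :
    (kron p n A) ^ k = kron p n (fun i => A i ^ k) := by
  induction k with
  | zero => omega
  | succ k ih =>
    rcases Nat.eq_or_lt_of_le hk with h | h
    · simp [← h]
    · rw [pow_succ, ih (by omega), kron_mul]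
      simp [pow_succ]

lemma kron_const_diag (p n : ℕ) [NeZero p] (c : Fin n → ℂ) (hc : ∏ i, c i = 1) :
    kron p n (fun i => Matrix.diagonal (fun _ => c i)) = 1 := by
  ext f g
  by_cases h : f = g
  · subst h
    simp [kron, Matrix.one_apply, hc]
  · obtain ⟨i, hi⟩ : ∃ i, f i ≠ g i := by
      by_contra hc'
      push_neg at hc'
      exact h (funext hc')
    have : (1 : Matrix (Fin n → ZMod p) (Fin n → ZMod p) ℂ) f g = 0 := Matrix.one_apply_ne h
    rw [this]
    simp only [kron, Matrix.of_apply]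
    exact Finset.prod_eq_zero (Finset.mem_univ i) (by simp [Matrix.diagonal_apply, hi])


lemma M_eq_shiftD (p : ℕ) [NeZero p] (ξ : ZMod p → ℂ) (b : ZMod p) :
    Matrix.diagonal ξ * Xmat p ^ b.val = shiftD p ξ b := by
  rw [diagonal_eq_shiftD, Xmat_pow, shiftD_mul]
  simp [ZMod.natCast_val, ZMod.cast_id]

lemma Mpow_ne_zero (p : ℕ) [NeZero p] (hp : Nat.Prime p) (ξ : ZMod p → ℂ)
    (hdet : ∏ q : ZMod p, ξ q = 1) (b : ZMod p) (hb : b ≠ 0) :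
    (Matrix.diagonal ξ * Xmat p ^ b.val) ^ p = 1 := by
  haveI : Fact p.Prime := ⟨hp⟩
  rw [M_eq_shiftD, shiftD_pow]
  have h0 : p • b = 0 := by
    simp [nsmul_eq_mul, ZMod.natCast_self]
  rw [h0]
  have hprod : ∀ q : ZMod p, ∏ t ∈ Finset.range p, ξ (q - (t : ZMod p) * b) = 1 := by
    intro q
    rw [← hdet]
    refine Finset.prod_nbij' (fun t => q - (t : ZMod p) * b)
      (fun x => ((q - x) * b⁻¹).val) (fun t _ => Finset.mem_univ _)
      (fun x _ => Finset.mem_range.2 (ZMod.val_lt _)) ?_ ?_ (fun t _ => rfl)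
    · intro t ht
      show ((q - (q - (t : ZMod p) * b)) * b⁻¹).val = t
      have h1 : q - (q - (t : ZMod p) * b) = (t : ZMod p) * b := by ring
      rw [h1, mul_assoc, mul_inv_cancel₀ hb, mul_one, ZMod.val_cast_of_lt (Finset.mem_range.1 ht)]
    · intro x _
      show q - ((((q - x) * b⁻¹).val : ZMod p)) * b = x
      have : ((((q - x) * b⁻¹).val : ZMod p)) = (q - x) * b⁻¹ := by
        simp [ZMod.natCast_val, ZMod.cast_id]
      rw [this, mul_assoc, inv_mul_cancel₀ hb, mul_one]
      ring
  have : (fun q => ∏ t ∈ Finset.range p, ξ (q - (t : ZMod p) * b)) = fun _ => (1:ℂ) := by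
    funext q; exact hprod q
  rw [this, ← diagonal_eq_shiftD]
  simp


lemma geo_sum (p M : ℕ) (hp : 1 ≤ p) :
    ∑ j ∈ Finset.range M, ((p:ℝ) - 1)/p^(j+1) = 1 - (1/p)^M := by
  have hp0 : (p:ℝ) ≠ 0 := by positivity
  induction M with
  | zero => simp
  | succ M ih =>
    rw [Finset.sum_range_succ, ih]
    simp only [one_div, inv_pow]
    field_simp
    ring

lemma core (p : ℕ) [NeZero p] (hp : Nat.Prime p) (M : ℕ) (ϑ : Fin (M+2) → ZMod p → ZMod p)
    (hI : ∀ j : Fin (M+2), 1 ≤ j.val → ∀ a : ZMod p, a ≠ 0 → ϑ j a = 0)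
    (hdet : ∏ q : ZMod p, expForm p (M+2) ϑ q = 1) (q : ZMod p) :
    expForm p (M+2) ϑ q ^ p
      = Complex.exp (2 * Real.pi * Complex.I / p * ((ϑ 1 0).val : ℂ)) := by
  have hpR : (1:ℝ) ≤ p := by exact_mod_cast hp.one_lt.le
  have hp0 : (p:ℂ) ≠ 0 := by exact_mod_cast hp.ne_zero
  have hp0R : (p:ℝ) ≠ 0 := by exact_mod_cast hp.ne_zero
  set c : ℂ := 2 * Real.pi * Complex.I with hc
  have hc0 : c ≠ 0 := by
    simp only [hc]
    apply mul_ne_zero (mul_ne_zero two_ne_zero _) Complex.I_ne_zero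
    exact_mod_cast Real.pi_ne_zero
  have hexp_pow : ∀ (w : ℂ) (k : ℕ), Complex.exp w ^ k = Complex.exp (k * w) :=
    fun w k => (Complex.exp_nat_mul w k).symm
  -- Step 1: sums collapse for k ≥ 1
  have hT : ∀ k : Fin (M+2), 1 ≤ k.val → ∀ q' : ZMod p,
      (∑ a : ZMod p, ((ϑ k a).val : ℂ) * ((q'.val : ℂ) ^ a.val)) = ((ϑ k 0).val : ℂ) := by
    intro k hk q'
    rw [Finset.sum_eq_single 0]
    · simp
    · intro a _ ha; rw [hI k hk a ha]; simp
    · simp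
  -- Step 2: decomposition
  set N0 : ZMod p → ℂ := fun q' => ∑ a : ZMod p, ((ϑ 0 a).val : ℂ) * ((q'.val : ℂ) ^ a.val)
    with hN0
  set ζ1 : ℕ := (ϑ 1 0).val with hζ1
  set ζ : Fin M → ℕ := fun k => (ϑ k.succ.succ 0).val with hζ
  set R : ℂ := ∏ k : Fin M, Complex.exp (c / p^(k.val+3) * (ζ k : ℂ)) with hR
  have hdecomp : ∀ q' : ZMod p, expForm p (M+2) ϑ q'
      = Complex.exp (c / p * N0 q') * (Complex.exp (c / p^2 * (ζ1 : ℂ)) * R) := by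
    intro q'
    rw [expForm, Fin.prod_univ_succ, Fin.prod_univ_succ]
    congr 1
    · rw [hN0]
      norm_num
      rw [hc]
    congr 1
    · rw [hT ((0 : Fin (M+1)).succ) (by simp) q', hζ1]
      simp [Fin.succ_zero_eq_one]
      rw [hc]
    · rw [hR]
      apply Finset.prod_congr rfl
      intro k _
      rw [hT k.succ.succ (by simp [Fin.val_succ]) q', hζ]
      simp [Fin.val_succ]
      rw [hc]
  -- Step 3: pth powers
  have hE0p : ∀ q' : ZMod p, Complex.exp (c / p * N0 q') ^ p = 1 := by
    intro q'
    rw [hexp_pow]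
    have hcast : N0 q' = ((∑ a : ZMod p, (ϑ 0 a).val * q'.val ^ a.val : ℕ) : ℂ) := by
      rw [hN0]; push_cast; ring
    have harg : (p:ℂ) * (c / p * N0 q')
        = ((∑ a : ZMod p, (ϑ 0 a).val * q'.val ^ a.val : ℕ) : ℂ) * (2 * Real.pi * Complex.I) := by
      rw [hcast, hc]; field_simp
    rw [harg, Complex.exp_nat_mul_two_pi_mul_I]
  have hAp : Complex.exp (c / p^2 * (ζ1:ℂ)) ^ p = Complex.exp (c / p * (ζ1:ℂ)) := by
    rw [hexp_pow]
    congr 1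
    field_simp
  have hApp : Complex.exp (c / p * (ζ1:ℂ)) ^ p = 1 := by
    rw [hexp_pow]
    have : (p:ℂ) * (c / p * (ζ1:ℂ)) = (ζ1:ℂ) * (2 * Real.pi * Complex.I) := by
      rw [hc]; field_simp
    rw [this, Complex.exp_nat_mul_two_pi_mul_I]
  -- the key real number
  set xr : ℝ := ∑ k : Fin M, (ζ k : ℝ) / p^(k.val+1) with hxr
  have hRpp : (R ^ p) ^ p = Complex.exp (c * (xr : ℂ)) := by
    rw [hR, ← pow_mul, ← Finset.prod_pow]
    have hterm : ∀ k : Fin M, Complex.exp (c / p^(k.val+3) * (ζ k : ℂ)) ^ (p * p)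
        = Complex.exp (c * ((ζ k : ℂ) / p^(k.val+1))) := by
      intro k
      rw [hexp_pow]
      congr 1
      have hsplit : (p:ℂ)^(k.val+3) = p^(k.val+1) * (p * p) := by ring
      rw [hsplit]
      field_simp
      push_cast
      ring
    rw [Finset.prod_congr rfl (fun k _ => hterm k), ← Complex.exp_sum]
    congr 1
    rw [← Finset.mul_sum]
    congr 1
    rw [hxr]
    push_cast
    rfl
  -- Step 4: use hdet
  have hdet' : Complex.exp (c / p * (∑ q' : ZMod p, N0 q'))
      * (Complex.exp (c / p^2 * (ζ1:ℂ)) * R) ^ p = 1 := by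
    rw [← hdet]
    rw [Finset.prod_congr rfl (fun q' _ => hdecomp q')]
    rw [Finset.prod_mul_distrib, Finset.prod_const, Finset.card_univ, ZMod.card]
    congr 1
    rw [← Complex.exp_sum, ← Finset.mul_sum]
  have hCp : ((Complex.exp (c / p^2 * (ζ1:ℂ)) * R) ^ p) ^ p = 1 := by
    have h1 : (Complex.exp (c / p^2 * (ζ1:ℂ)) * R) ^ p
        = (Complex.exp (c / p * (∑ q' : ZMod p, N0 q')))⁻¹ :=
      eq_inv_of_mul_eq_one_left (by rw [mul_comm]; exact hdet')
    rw [h1, ← Complex.exp_neg, hexp_pow]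
    have hScast : (∑ q' : ZMod p, N0 q')
        = ((∑ q' : ZMod p, ∑ a : ZMod p, (ϑ 0 a).val * q'.val ^ a.val : ℕ) : ℂ) := by
      rw [hN0]; push_cast; ring
    have harg : (p:ℂ) * -(c / p * (∑ q' : ZMod p, N0 q'))
        = ((-(∑ q' : ZMod p, ∑ a : ZMod p, (ϑ 0 a).val * q'.val ^ a.val : ℕ) : ℤ) : ℂ)
          * (2 * Real.pi * Complex.I) := by
      rw [hScast, hc]
      push_cast
      field_simp
    rw [harg, Complex.exp_int_mul_two_pi_mul_I]
  -- conclude exp (c * xr) = 1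
  have hx1 : Complex.exp (c * (xr : ℂ)) = 1 := by
    rw [← hRpp]
    have hexpand : ((Complex.exp (c / p^2 * (ζ1:ℂ)) * R) ^ p) ^ p
        = (Complex.exp (c / p * (ζ1:ℂ))) ^ p * (R ^ p) ^ p := by
      rw [mul_pow, hAp, mul_pow]
    rw [hexpand, hApp, one_mul] at hCp
    exact hCp
  -- xr = 0
  have hxr_nonneg : 0 ≤ xr := by
    rw [hxr]
    apply Finset.sum_nonneg
    intro k _
    positivity
  have hxr_lt : xr < 1 := by
    have hbound : xr ≤ 1 - (1/(p:ℝ))^M := by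
      rw [← geo_sum p M hp.one_lt.le, hxr,
        ← Fin.sum_univ_eq_sum_range (fun j => ((p:ℝ) - 1)/(p:ℝ)^(j+1)) M]
      apply Finset.sum_le_sum
      intro k _
      have hpos : (0:ℝ) < (p:ℝ)^(k.val+1) := by positivity
      apply (div_le_div_iff_of_pos_right hpos).2
      have h2 : (ζ k : ℝ) + 1 ≤ p := by
        have := ZMod.val_lt (ϑ k.succ.succ 0)
        rw [hζ]
        exact_mod_cast this
      linarith
    have hpow : (0:ℝ) < (1/(p:ℝ))^M := by positivity
    linarith
  have hxr0 : xr = 0 := by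
    rcases Complex.exp_eq_one_iff.1 hx1 with ⟨nz, hnz⟩
    rw [mul_comm c ((xr:ℂ))] at hnz
    have hxz : (xr : ℂ) = (nz : ℂ) := mul_right_cancel₀ hc0 hnz
    have hxrz : xr = (nz : ℝ) := by exact_mod_cast hxz
    have h0 : (0:ℝ) ≤ (nz:ℝ) := hxrz ▸ hxr_nonneg
    have h1 : ((nz:ℝ)) < 1 := hxrz ▸ hxr_lt
    have hnz0 : nz = 0 := by
      have h0' : (0:ℤ) ≤ nz := by exact_mod_cast h0
      have h1' : nz < 1 := by exact_mod_cast h1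
      omega
    rw [hxrz, hnz0]; simp
  -- all ζ k = 0
  have hζ0 : ∀ k : Fin M, ζ k = 0 := by
    intro k
    have hterm0 := (Finset.sum_eq_zero_iff_of_nonneg
      (fun k (_ : k ∈ Finset.univ) => by positivity :
        ∀ k ∈ Finset.univ, 0 ≤ (ζ k : ℝ) / p^(k.val+1))).1 (hxr ▸ hxr0) k (Finset.mem_univ k)
    have hpos : (0:ℝ) < (p:ℝ)^(k.val+1) := by positivity
    field_simp at hterm0
    exact_mod_cast hterm0
  have hR1 : R = 1 := by
    rw [hR]
    apply Finset.prod_eq_one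
    intro k _
    rw [hζ0 k]
    simp
  -- final
  rw [hdecomp q, mul_pow, hE0p q, one_mul, mul_pow, hAp, hR1, one_pow, mul_one]


/-- Let `p` be an odd prime.  An element `M = M_1 ⊗ ⋯ ⊗ M_n ∈ K_Q(p)^{⊗n}` with
`M_i = S_{ξ_i} X^{b_i}` is `p`-torsion if: for every `i` with `b_i = 0` the expansion
coefficients of `ξ_i` satisfy `ϑ_{j,a}^{(i)} = 0` for all `j ≥ 2`, `a ≠ 0`, and
`Σ_{i : b_i = 0} ϑ_{2,0}^{(i)} ≡ 0 (mod p)`. -/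
theorem stmt_11 (p m n : ℕ) [NeZero p] (hp : Nat.Prime p) (hodd : Odd p) (hm : 2 ≤ m)
    (b : Fin n → ZMod p) (ϑ : Fin n → Fin m → ZMod p → ZMod p) (ξ : Fin n → ZMod p → ℂ)
    (hξ : ∀ i q, ξ i q = expForm p m (ϑ i) q)
    (hdet : ∀ i, ∏ q : ZMod p, ξ i q = 1)
    (hI : ∀ i, b i = 0 → ∀ j : Fin m, 1 ≤ j.val → ∀ a : ZMod p, a ≠ 0 → ϑ i j a = 0)
    (hsum : (∑ i ∈ Finset.univ.filter (fun i => b i = 0),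
      ϑ i ⟨1, by omega⟩ 0) = 0) :
    (kron p n (fun i => Matrix.diagonal (ξ i) * Xmat p ^ (b i).val)) ^ p = 1 := by
  haveI := Fact.mk hp
  obtain ⟨M, rfl⟩ : ∃ M, m = M + 2 := ⟨m - 2, by omega⟩
  have h1fin : (⟨1, by omega⟩ : Fin (M+2)) = 1 := by
    ext; simp
  rw [h1fin] at hsum
  have key : (kron p n fun i => Matrix.diagonal (ξ i) * Xmat p ^ (b i).val) ^ p
      = kron p n (fun i => Matrix.diagonal (fun _ => if b i = 0 then
          Complex.exp (2 * Real.pi * Complex.I / p * ((ϑ i 1 0).val : ℂ)) else 1)) := by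
    rw [kron_pow p n _ p hp.one_le]
    apply congrArg (kron p n)
    funext i
    by_cases hb : b i = 0
    · have hv : (b i).val = 0 := by rw [hb, ZMod.val_zero]
      rw [hv, pow_zero, mul_one, Matrix.diagonal_pow]
      have hfun : (ξ i) ^ p = (fun _ : ZMod p => if b i = 0 then
          Complex.exp (2 * Real.pi * Complex.I / p * ((ϑ i 1 0).val : ℂ)) else 1) := by
        funext q
        have hdet2 : ∏ q' : ZMod p, expForm p (M+2) (ϑ i) q' = 1 := by
          rw [← hdet i]
          exact Finset.prod_congr rfl fun q' _ => (hξ i q').symm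
        show ξ i q ^ p = _
        rw [hξ i q, core p hp M (ϑ i) (hI i hb) hdet2 q, if_pos hb]
      rw [hfun]
    · rw [Mpow_ne_zero p hp (ξ i) (hdet i) (b i) hb, if_neg hb]
      exact Matrix.diagonal_one.symm
  rw [key]
  apply kron_const_diag
  rw [← Finset.prod_filter (fun i => b i = 0)
    (fun i => Complex.exp (2 * Real.pi * Complex.I / p * ((ϑ i 1 0).val : ℂ))),
    ← Complex.exp_sum, ← Finset.mul_sum]
  have hcast : (∑ i ∈ Finset.univ.filter (fun i => b i = 0), ((ϑ i 1 0).val : ℂ))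
      = ((∑ i ∈ Finset.univ.filter (fun i => b i = 0), (ϑ i 1 0).val : ℕ) : ℂ) := by
    push_cast; ring
  have hT0 : ((∑ i ∈ Finset.univ.filter (fun i => b i = 0), (ϑ i 1 0).val : ℕ) : ZMod p)
      = 0 := by
    push_cast
    simp only [ZMod.natCast_val, ZMod.cast_id]
    exact hsum
  obtain ⟨t, ht⟩ := (ZMod.natCast_eq_zero_iff _ p).1 hT0
  have hp0 : (p:ℂ) ≠ 0 := by exact_mod_cast hp.ne_zero
  rw [hcast, ht]
  have harg : 2 * Real.pi * Complex.I / p * ((p * t : ℕ) : ℂ)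
      = (t:ℕ) * (2 * Real.pi * Complex.I) := by
    push_cast
    field_simp
  rw [harg, Complex.exp_nat_mul_two_pi_mul_I]
end
end

section
/- Let p be an odd prime, Γ the solution group of a LCS over ℤ_p, η: Γ → G a solution (group homomorphism respecting the LCS relations), and φ: G → H any map that restricts to a group homomorphism on every p-torsion abelian subgroup of G. Then φ ∘ η: Γ → H is also a solution to the LCS. -/
section Aux

variable {G H : Type*} [Group G] [Group H]

lemma aux_comm (T : Set G) (hc : ∀ x ∈ T, ∀ y ∈ T, x * y = y * x) :
    ∀ x ∈ Subgroup.closure T, ∀ y ∈ Subgroup.closure T, x * y = y * x := by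
  intro x hx y hy
  refine Subgroup.closure_induction₂ (p := fun a b _ _ => a * b = b * a)
    (fun a b ha hb => hc a ha b hb) (by simp) (by simp)
    (fun a b c _ _ _ h1 h2 => show (a * b) * c = c * (a * b) by
      rw [mul_assoc, h2, ← mul_assoc, h1, mul_assoc])
    (fun a b c _ _ _ h1 h2 => show c * (a * b) = (a * b) * c by
      rw [← mul_assoc, h1, mul_assoc, h2, ← mul_assoc])
    (fun a b _ _ h => show a⁻¹ * b = b * a⁻¹ by
      have := congrArg (fun z => a⁻¹ * z * a⁻¹) h.symm
      simpa [mul_assoc] using this)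
    (fun a b _ _ h => show a * b⁻¹ = b⁻¹ * a by
      have := congrArg (fun z => b⁻¹ * z * b⁻¹) h.symm
      simpa [mul_assoc] using this) hx hy

lemma aux_tor (p : ℕ) (T : Set G) (htor : ∀ x ∈ T, x ^ p = 1)
    (hc : ∀ x ∈ T, ∀ y ∈ T, x * y = y * x) :
    ∀ x ∈ Subgroup.closure T, x ^ p = 1 := by
  intro x hx
  refine Subgroup.closure_induction (p := fun a _ => a ^ p = 1)
    (fun a ha => htor a ha) (by simp)
    (fun a b ha hb h1 h2 => show (a * b) ^ p = 1 from ?_)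
    (fun a _ h => show a⁻¹ ^ p = 1 by rw [inv_pow, h, inv_one]) hx
  have hcomm : Commute a b := aux_comm T hc a ha b hb
  show (a * b) ^ p = 1
  rw [hcomm.mul_pow, h1, h2, one_mul]

/-- φ is multiplicative on the closure of a commuting p-torsion set. -/
lemma aux_mul (p : ℕ) (φ : G → H)
    (hφ : ∀ S : Subgroup G, (∀ x ∈ S, x ^ p = 1) → (∀ x ∈ S, ∀ y ∈ S, x * y = y * x) →
      ∀ x ∈ S, ∀ y ∈ S, φ (x * y) = φ x * φ y)
    (T : Set G) (htor : ∀ x ∈ T, x ^ p = 1)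
    (hc : ∀ x ∈ T, ∀ y ∈ T, x * y = y * x) :
    ∀ x ∈ Subgroup.closure T, ∀ y ∈ Subgroup.closure T, φ (x * y) = φ x * φ y :=
  hφ (Subgroup.closure T) (aux_tor p T htor hc) (aux_comm T hc)

lemma aux_one (p : ℕ) (φ : G → H)
    (hφ : ∀ S : Subgroup G, (∀ x ∈ S, x ^ p = 1) → (∀ x ∈ S, ∀ y ∈ S, x * y = y * x) →
      ∀ x ∈ S, ∀ y ∈ S, φ (x * y) = φ x * φ y) : φ 1 = 1 := by
  have h := hφ ⊥ (by simp) (by simp) 1 (by simp) 1 (by simp)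
  rw [mul_one] at h
  exact (right_eq_mul.mp h).symm.symm

lemma aux_pow (p : ℕ) (φ : G → H)
    (hφ : ∀ S : Subgroup G, (∀ x ∈ S, x ^ p = 1) → (∀ x ∈ S, ∀ y ∈ S, x * y = y * x) →
      ∀ x ∈ S, ∀ y ∈ S, φ (x * y) = φ x * φ y)
    (T : Set G) (htor : ∀ x ∈ T, x ^ p = 1)
    (hc : ∀ x ∈ T, ∀ y ∈ T, x * y = y * x)
    {x : G} (hx : x ∈ Subgroup.closure T) (n : ℕ) : φ (x ^ n) = φ x ^ n := by
  induction n with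
  | zero => simpa using aux_one p φ hφ
  | succ n ih =>
      rw [pow_succ, aux_mul p φ hφ T htor hc _ (pow_mem hx n) x hx, ih, pow_succ]

end Aux

/-- Let `p` be an odd prime, `Γ` the solution group of a LCS `A x = b` over `ℤ_p`,
`η : Γ → G` a solution (an assignment `J, g_1, …, g_N` in `G` satisfying the defining
relations of `Γ`), and `φ : G → H` any map that restricts to a group homomorphism on every
`p`-torsion abelian subgroup of `G`.  Then `φ ∘ η : Γ → H` is also a solution of the LCS. -/
theorem stmt_17 {G H : Type*} [Group G] [Group H] (p N r : ℕ)
    (hp : Nat.Prime p) (hodd : Odd p)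
    (A : Matrix (Fin r) (Fin N) (ZMod p)) (bvec : Fin r → ZMod p)
    (φ : G → H)
    (hφ : ∀ S : Subgroup G, (∀ x ∈ S, x ^ p = 1) → (∀ x ∈ S, ∀ y ∈ S, x * y = y * x) →
      ∀ x ∈ S, ∀ y ∈ S, φ (x * y) = φ x * φ y)
    (J : G) (g : Fin N → G)
    (hJtor : J ^ p = 1) (hgtor : ∀ k, g k ^ p = 1)
    (hJcomm : ∀ k, J * g k = g k * J)
    (hcomm : ∀ i j k, A i j ≠ 0 → A i k ≠ 0 → g j * g k = g k * g j)
    (hcons : ∀ i, ((List.finRange N).map (fun j => g j ^ (A i j).val)).prod =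
      J ^ (bvec i).val) :
    (φ J) ^ p = 1 ∧ (∀ k, (φ (g k)) ^ p = 1) ∧
      (∀ k, φ J * φ (g k) = φ (g k) * φ J) ∧
      (∀ i j k, A i j ≠ 0 → A i k ≠ 0 → φ (g j) * φ (g k) = φ (g k) * φ (g j)) ∧
      (∀ i, ((List.finRange N).map (fun j => φ (g j) ^ (A i j).val)).prod =
        (φ J) ^ (bvec i).val) := by
  have hone : φ 1 = 1 := aux_one p φ hφ
  -- single element closure lemma
  have single : ∀ x : G, x ^ p = 1 → ∀ n, φ (x ^ n) = φ x ^ n := by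
    intro x hx n
    refine aux_pow p φ hφ {x} ?_ ?_ (Subgroup.subset_closure rfl) n
    · rintro y rfl; exact hx
    · rintro y rfl z rfl; rfl
  refine ⟨?_, ?_, ?_, ?_, ?_⟩
  · rw [← single J hJtor p, hJtor, hone]
  · intro k; rw [← single (g k) (hgtor k) p, hgtor k, hone]
  · -- comm of φ J, φ (g k)
    intro k
    set T : Set G := {J, g k} with hT
    have htor : ∀ x ∈ T, x ^ p = 1 := by rintro x (rfl | rfl); exacts [hJtor, hgtor k]
    have hc : ∀ x ∈ T, ∀ y ∈ T, x * y = y * x := by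
      rintro x (rfl | rfl) y (rfl | rfl)
      · rfl
      · exact hJcomm k
      · exact (hJcomm k).symm
      · rfl
    have hJm : J ∈ Subgroup.closure T := Subgroup.subset_closure (Or.inl rfl)
    have hgm : g k ∈ Subgroup.closure T := Subgroup.subset_closure (Or.inr rfl)
    rw [← aux_mul p φ hφ T htor hc J hJm _ hgm, ← aux_mul p φ hφ T htor hc _ hgm J hJm,
      hJcomm k]
  · intro i j k hj hk
    set T : Set G := {g j, g k} with hT
    have htor : ∀ x ∈ T, x ^ p = 1 := by rintro x (rfl | rfl); exacts [hgtor j, hgtor k]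
    have hc : ∀ x ∈ T, ∀ y ∈ T, x * y = y * x := by
      rintro x (rfl | rfl) y (rfl | rfl)
      · rfl
      · exact hcomm i j k hj hk
      · exact hcomm i k j hk hj
      · rfl
    have hjm : g j ∈ Subgroup.closure T := Subgroup.subset_closure (Or.inl rfl)
    have hkm : g k ∈ Subgroup.closure T := Subgroup.subset_closure (Or.inr rfl)
    rw [← aux_mul p φ hφ T htor hc _ hjm _ hkm, ← aux_mul p φ hφ T htor hc _ hkm _ hjm,
      hcomm i j k hj hk]
  · intro i
    set T : Set G := insert J {x | ∃ j, A i j ≠ 0 ∧ x = g j} with hT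
    have htor : ∀ x ∈ T, x ^ p = 1 := by
      rintro x (rfl | ⟨j, _, rfl⟩); exacts [hJtor, hgtor j]
    have hc : ∀ x ∈ T, ∀ y ∈ T, x * y = y * x := by
      rintro x (rfl | ⟨j, hj, rfl⟩) y (rfl | ⟨k, hk, rfl⟩)
      · rfl
      · exact hJcomm k
      · exact (hJcomm j).symm
      · exact hcomm i j k hj hk
    have hmem : ∀ j : Fin N, g j ^ (A i j).val ∈ Subgroup.closure T := by
      intro j
      by_cases hj : A i j = 0
      · simp only [hj, ZMod.val_zero, pow_zero]; exact one_mem _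
      · have hmemT : g j ∈ T := Set.mem_insert_of_mem _ ⟨j, hj, rfl⟩
        exact pow_mem (Subgroup.subset_closure hmemT) _
    have hJm : J ∈ Subgroup.closure T := Subgroup.subset_closure (Set.mem_insert _ _)
    -- φ of a list product of elements in the closure
    have hlist : ∀ l : List (Fin N),
        φ ((l.map (fun j => g j ^ (A i j).val)).prod) =
          (l.map (fun j => φ (g j) ^ (A i j).val)).prod := by
      intro l
      induction l with
      | nil => simpa using hone
      | cons a l ih =>
          have hprod : (l.map (fun j => g j ^ (A i j).val)).prod ∈ Subgroup.closure T := by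
            refine list_prod_mem ?_
            intro x hx
            simp only [List.mem_map] at hx
            obtain ⟨j, _, rfl⟩ := hx
            exact hmem j
          have hpow : φ (g a ^ (A i a).val) = φ (g a) ^ (A i a).val := by
            by_cases ha : A i a = 0
            · simp [ha, hone]
            · exact aux_pow p φ hφ T htor hc
                (Subgroup.subset_closure (Set.mem_insert_of_mem _ ⟨a, ha, rfl⟩)) _
          simp only [List.map_cons, List.prod_cons]
          rw [aux_mul p φ hφ T htor hc _ (hmem a) _ hprod, hpow, ih]
    have := hlist (List.finRange N)
    rw [hcons i] at this
    rw [← this, aux_pow p φ hφ T htor hc hJm]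
end
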